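/- arXiv:1306.5674 — 3 statements merged into one kernel-verified Lean document; each statement's English description precedes it below -/
import Mathlib

section
/- Let Assumption (A) be satisfied. Then there exists M_0 ≥ 1, independent of k, such that sup_{λ ∈ Ω_k} |λ − iω_k|^α ‖R(λ,A)‖ ≤ M_0 for every k ∈ I, where Ω_k = {λ ∈ ℂ : Re λ ≥ 0, 0 < |λ − iω_k| ≤ ε_A}. -/
open Complex Filter Topology MeasureTheory

noncomputable section

/-- A strongly continuous semigroup of bounded linear operators on `X`
(only the values at times `t ≥ 0` are relevant). -/
structure C0Semigroup (X : Type*) [NormedAddCommGroup X] [NormedSpace ℂ X] where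
  T : ℝ → X →L[ℂ] X
  map_zero : T 0 = 1
  map_add : ∀ s t : ℝ, 0 ≤ s → 0 ≤ t → T (s + t) = (T s).comp (T t)
  strong_continuity : ∀ x : X, ContinuousOn (fun t => T t x) (Set.Ici (0 : ℝ))

variable {X : Type*} [NormedAddCommGroup X] [NormedSpace ℂ X]

/-- `A` (an unbounded operator, i.e. a partially defined linear map) is the infinitesimal
generator of the semigroup `S`: the graph of `A` consists exactly of the pairs `(x, y)`
such that the orbit `t ↦ S.T t x` has right derivative `y` at `t = 0`. -/
def IsGenerator (A : X →ₗ.[ℂ] X) (S : C0Semigroup X) : Prop :=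
  ∀ x y : X, (x, y) ∈ A.graph ↔
    Tendsto (fun t : ℝ => (t : ℂ)⁻¹ • (S.T t x - x)) (nhdsWithin 0 (Set.Ioi 0)) (nhds y)

/-- Strong stability: `‖T(t)x‖ → 0` as `t → ∞` for every `x`. -/
def StronglyStable (S : C0Semigroup X) : Prop :=
  ∀ x : X, Tendsto (fun t => ‖S.T t x‖) atTop (nhds 0)

/-- Uniform boundedness of a semigroup. -/
def UniformlyBounded (S : C0Semigroup X) : Prop :=
  ∃ M : ℝ, ∀ t : ℝ, 0 ≤ t → ‖S.T t‖ ≤ M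

/-- The resolvent set of a partially defined linear operator `A`: those `l : ℂ` for which
`l - A` has a bounded everywhere-defined two-sided inverse. -/
def ResolventSet (A : X →ₗ.[ℂ] X) : Set ℂ :=
  { l | ∃ R : X →L[ℂ] X, (∀ x : X, (R x, l • R x - x) ∈ A.graph) ∧
      ∀ x : A.domain, R (l • (x : X) - A x) = x }

open scoped Classical in
/-- The resolvent operator `R(l, A) = (l - A)⁻¹` (junk value `0` if `l` is not in the
resolvent set). -/
noncomputable def resolventOp (A : X →ₗ.[ℂ] X) (l : ℂ) : X →L[ℂ] X :=
  if h : l ∈ ResolventSet A then h.choose else 0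

/-- The point spectrum (set of eigenvalues) of `A`. -/
def PointSpectrum (A : X →ₗ.[ℂ] X) : Set ℂ :=
  { l | ∃ x : A.domain, (x : X) ≠ 0 ∧ A x = l • (x : X) }

/-- The continuous spectrum of `A`: points `l ∉ ρ(A)` such that `l - A` is injective
with dense range. -/
def ContinuousSpectrum (A : X →ₗ.[ℂ] X) : Set ℂ :=
  { l | l ∉ ResolventSet A ∧ (∀ x : A.domain, l • (x : X) - A x = 0 → (x : X) = 0) ∧
      Dense (Set.range fun x : A.domain => l • (x : X) - A x) }

/-- The operator `l - A` as a partially defined linear map with domain `D(A)`. -/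
def shiftPMap (l : ℂ) (A : X →ₗ.[ℂ] X) : X →ₗ.[ℂ] X :=
  ⟨A.domain, l • A.domain.subtype - A.toFun⟩

/-- The perturbed operator `A + P` (with `P` bounded), with domain `D(A)`. -/
def addBoundedOp (A : X →ₗ.[ℂ] X) (P : X →L[ℂ] X) : X →ₗ.[ℂ] X :=
  ⟨A.domain, A.toFun + P.toLinearMap.comp A.domain.subtype⟩

/-- An abstract system of (real) fractional powers of the (injective, sectorial) operator `A`:
a family `pow r` of partially defined operators with `pow 1 = A`, `pow 0 = I`, such that
`pow (-r)` is the inverse of `pow r`, and positive powers compose additively.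
(For sectorial operators this is satisfied by the fractional powers given by the sectorial
functional calculus.) -/
structure FracPowSystem (A : X →ₗ.[ℂ] X) where
  pow : ℝ → (X →ₗ.[ℂ] X)
  pow_one : pow 1 = A
  pow_zero_domain : (pow 0).domain = ⊤
  pow_zero_apply : ∀ x : (pow 0).domain, pow 0 x = (x : X)
  pow_neg : ∀ r : ℝ, ∀ x y : X, (x, y) ∈ (pow r).graph ↔ (y, x) ∈ (pow (-r)).graph
  pow_add : ∀ r s : ℝ, 0 ≤ r → 0 ≤ s → ∀ x y z : X,
    (x, y) ∈ (pow s).graph → (y, z) ∈ (pow r).graph → (x, z) ∈ (pow (r + s)).graph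

/-- Polynomial stability with exponent `α` of the semigroup `S` generated by `A`:
`S` is uniformly bounded, `σ(A) ∩ iℝ = ∅`, and `‖T(t) A⁻¹‖ ≤ M t^{-1/α}` for `t > 0`
(here `A⁻¹ = -R(0,A)`). -/
def PolynomiallyStable (S : C0Semigroup X) (A : X →ₗ.[ℂ] X) (α : ℝ) : Prop :=
  UniformlyBounded S ∧ (∀ ω : ℝ, ((ω : ℂ) * Complex.I) ∈ ResolventSet A) ∧
    ∃ M : ℝ, 1 ≤ M ∧ ∀ t : ℝ, 0 < t → ‖(S.T t).comp (-(resolventOp A 0))‖ ≤ M / t ^ (1 / α)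

end

/-!
Strong stability makes the semigroup uniformly bounded, `‖T(t)‖ ≤ M` (Banach–Steinhaus), so the
Laplace transform of the orbits is the resolvent on `Re λ > 0`, with `‖R(λ,A)‖ ≤ M / Re λ`.
Write `λ - iω_k = σ + iδ`. In the sector `|δ| ≤ σ` this bound alone gives
`|λ - iω_k|^α ‖R(λ,A)‖ ≤ 2 ε_A^(α-1) M`. Otherwise the resolvent identity between `λ` and the
boundary point `i Im λ` gives `‖R(λ,A)‖ ≤ (1 + M) ‖R(i Im λ, A)‖`, and `|λ - iω_k| ≤ 2|δ|` turns the
assumed boundary estimate into `2^α (1 + M) M_A`. The boundary points used lie in `ρ(A)`, since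
`‖R(μ,A)‖ ≥ 1 / dist(μ, σ(A))` is incompatible with the assumed growth of the resolvent near `iω_k`.
-/

open Set

theorem StronglyStable.uniformlyBounded {X : Type*} [NormedAddCommGroup X] [NormedSpace ℂ X]
    [CompleteSpace X] {S : C0Semigroup X} (hS : StronglyStable S) : UniformlyBounded S := by
  have horbit : ∀ x : X, ∃ C, ∀ t : Ici (0 : ℝ), ‖S.T t x‖ ≤ C := by
    intro x
    obtain ⟨N, hN⟩ := ((hS x).eventually_lt_const one_pos).exists_forall_of_atTop
    obtain ⟨C, hC⟩ := (isCompact_Icc (a := 0) (b := max N 0)).exists_bound_of_continuousOn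
      ((S.strong_continuity x).mono Icc_subset_Ici_self)
    refine ⟨max C 1, fun t => ?_⟩
    rcases le_total (t : ℝ) (max N 0) with h | h
    · exact (hC t ⟨t.2, h⟩).trans (le_max_left _ _)
    · exact (hN t ((le_max_left _ _).trans h)).le.trans (le_max_right _ _)
  obtain ⟨C, hC⟩ := banach_steinhaus horbit
  exact ⟨C, fun t ht => hC ⟨t, ht⟩⟩

section Resolvent

variable {X : Type*} [NormedAddCommGroup X] [NormedSpace ℂ X] {A : X →ₗ.[ℂ] X} {l μ : ℂ}

def IsResolvent (A : X →ₗ.[ℂ] X) (l : ℂ) (R : X →L[ℂ] X) : Prop :=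
  (∀ x : X, (R x, l • R x - x) ∈ A.graph) ∧ ∀ x : A.domain, R (l • (x : X) - A x) = x

theorem IsResolvent.mem_resolventSet {R : X →L[ℂ] X} (h : IsResolvent A l R) :
    l ∈ ResolventSet A :=
  ⟨R, h⟩

theorem IsResolvent.unique {R R' : X →L[ℂ] X} (h : IsResolvent A l R)
    (h' : IsResolvent A l R') : R = R' := by
  ext x
  obtain ⟨y, hy, hAy⟩ := A.mem_graph_iff.mp (h'.1 x)
  simpa [hy, hAy] using h.2 y

theorem isResolvent_resolventOp (h : l ∈ ResolventSet A) :
    IsResolvent A l (resolventOp A l) := by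
  rw [resolventOp, dif_pos h]
  exact h.choose_spec

theorem IsResolvent.resolventOp_eq {R : X →L[ℂ] X} (h : IsResolvent A l R) :
    resolventOp A l = R :=
  (isResolvent_resolventOp h.mem_resolventSet).unique h

theorem resolventOp_eq_add (hl : l ∈ ResolventSet A) (hμ : μ ∈ ResolventSet A) :
    resolventOp A l = resolventOp A μ + (μ - l) • (resolventOp A μ * resolventOp A l) := by
  ext x
  obtain ⟨y, hy, hAy⟩ := A.mem_graph_iff.mp ((isResolvent_resolventOp hl).1 x)
  have h := (isResolvent_resolventOp hμ).2 y
  simp only at hy hAy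
  rw [hy, hAy, show μ • resolventOp A l x - (l • resolventOp A l x - x)
    = x + (μ - l) • resolventOp A l x by rw [sub_smul]; abel] at h
  simpa using h.symm

theorem norm_resolventOp_le (hl : l ∈ ResolventSet A) (hμ : μ ∈ ResolventSet A) :
    ‖resolventOp A l‖ ≤ ‖resolventOp A μ‖ * (1 + ‖μ - l‖ * ‖resolventOp A l‖) := by
  calc ‖resolventOp A l‖
      = ‖resolventOp A μ + (μ - l) • (resolventOp A μ * resolventOp A l)‖ := by
        rw [← resolventOp_eq_add hl hμ]
    _ ≤ ‖resolventOp A μ‖ + ‖μ - l‖ * (‖resolventOp A μ‖ * ‖resolventOp A l‖) := by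
        grw [norm_add_le, norm_smul, norm_mul_le]
    _ = ‖resolventOp A μ‖ * (1 + ‖μ - l‖ * ‖resolventOp A l‖) := by ring

/-- With `a = (l - μ) R(l)`, one has `μ - A = (1 - a)(l - A)` on `D(A)` and
`(μ - A) R(l) = 1 - a` on `X`, so `R(l) (1 - a)⁻¹` inverts `μ - A`. -/
theorem mem_resolventSet_of_norm_smul_lt_one [CompleteSpace X] (hl : l ∈ ResolventSet A)
    (h : ‖(l - μ) • resolventOp A l‖ < 1) : μ ∈ ResolventSet A := by
  obtain ⟨hgraph, hinv⟩ := isResolvent_resolventOp hl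
  set a := (l - μ) • resolventOp A l with ha
  set B : X →L[ℂ] X := ↑(Units.oneSub a h)⁻¹
  have hB : ∀ x, B x - a (B x) = x := fun x => by
    simpa using congrArg (· x) (Units.oneSub a h).mul_inv
  have hB' : ∀ x, B (x - a x) = x := fun x => by
    simpa using congrArg (· x) (Units.oneSub a h).inv_mul
  refine ⟨(resolventOp A l).comp B, fun x => ?_, fun x => ?_⟩
  · have hBx := hB x
    rw [ha, smul_apply] at hBx
    rw [ContinuousLinearMap.comp_apply,
      show μ • resolventOp A l (B x) - x = l • resolventOp A l (B x) - B x by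
        linear_combination (norm := module) hBx]
    exact hgraph (B x)
  · have hx : μ • (x : X) - A x = (l • (x : X) - A x) - a (l • (x : X) - A x) := by
      rw [ha, smul_apply, hinv x, sub_smul]
      abel
    rw [ContinuousLinearMap.comp_apply, hx, hB', hinv x]

theorem one_le_norm_sub_mul_norm_resolventOp [CompleteSpace X] (hl : l ∈ ResolventSet A)
    (hμ : μ ∉ ResolventSet A) : 1 ≤ ‖l - μ‖ * ‖resolventOp A l‖ := by
  by_contra! h
  exact hμ (mem_resolventSet_of_norm_smul_lt_one hl ((norm_smul_le _ _).trans_lt h))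

end Resolvent

namespace C0Semigroup

noncomputable section

variable {X : Type*} [NormedAddCommGroup X] [NormedSpace ℂ X] (S : C0Semigroup X)
  {M : ℝ} {l : ℂ}

def dampedOrbit (l : ℂ) (x : X) (t : ℝ) : X := cexp (-(l * t)) • S.T t x

def laplace (l : ℂ) (x : X) : X := ∫ t in Ioi (0 : ℝ), S.dampedOrbit l x t

theorem continuousOn_dampedOrbit (l : ℂ) (x : X) : ContinuousOn (S.dampedOrbit l x) (Ici 0) :=
  (by fun_prop : Continuous fun t : ℝ => cexp (-(l * t))).continuousOn.smul
    (S.strong_continuity x)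

theorem norm_dampedOrbit_le (hM : ∀ t, 0 ≤ t → ‖S.T t‖ ≤ M) (x : X) {t : ℝ} (ht : 0 ≤ t) :
    ‖S.dampedOrbit l x t‖ ≤ Real.exp (-l.re * t) * (M * ‖x‖) := by
  rw [dampedOrbit, norm_smul, Complex.norm_exp]
  have hre : (-(l * (t : ℂ))).re = -l.re * t := by simp
  rw [hre]
  gcongr
  exact (S.T t).le_of_opNorm_le (hM t ht) x

theorem integrableOn_dampedOrbit (hM : ∀ t, 0 ≤ t → ‖S.T t‖ ≤ M) (hl : 0 < l.re) (x : X) :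
    IntegrableOn (S.dampedOrbit l x) (Ioi 0) :=
  Integrable.mono' ((exp_neg_integrableOn_Ioi 0 hl).mul_const _)
    (((S.continuousOn_dampedOrbit l x).mono Ioi_subset_Ici_self).aestronglyMeasurable
      measurableSet_Ioi)
    ((ae_restrict_iff' measurableSet_Ioi).2
      (ae_of_all _ fun _ ht => S.norm_dampedOrbit_le hM x (le_of_lt ht)))

theorem norm_laplace_le (hM : ∀ t, 0 ≤ t → ‖S.T t‖ ≤ M) (hl : 0 < l.re) (x : X) :
    ‖S.laplace l x‖ ≤ M / l.re * ‖x‖ := by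
  have hexp : ∫ t in Ioi (0 : ℝ), Real.exp (-l.re * t) = l.re⁻¹ := by
    have h := integral_comp_mul_left_Ioi (fun u => Real.exp (-u)) 0 hl
    simp only [mul_zero, integral_exp_neg_Ioi, neg_zero, Real.exp_zero, smul_eq_mul,
      mul_one] at h
    simpa [neg_mul] using h
  calc ‖S.laplace l x‖ ≤ ∫ t in Ioi (0 : ℝ), Real.exp (-l.re * t) * (M * ‖x‖) :=
        norm_integral_le_of_norm_le ((exp_neg_integrableOn_Ioi 0 hl).mul_const _)
          ((ae_restrict_iff' measurableSet_Ioi).2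
            (ae_of_all _ fun _ ht => S.norm_dampedOrbit_le hM x (le_of_lt ht)))
    _ = M / l.re * ‖x‖ := by rw [integral_mul_const, hexp]; field_simp

def laplaceCLM (hM : ∀ t, 0 ≤ t → ‖S.T t‖ ≤ M) (hl : 0 < l.re) : X →L[ℂ] X :=
  LinearMap.mkContinuous
    { toFun := S.laplace l
      map_add' := fun x y => by
        rw [laplace, laplace, laplace, ← integral_add (S.integrableOn_dampedOrbit hM hl x)
          (S.integrableOn_dampedOrbit hM hl y)]
        simp [dampedOrbit]
      map_smul' := fun c x => by
        rw [laplace, laplace, ← integral_smul]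
        simp [dampedOrbit, smul_comm c] }
    (M / l.re) (S.norm_laplace_le hM hl)

@[simp]
theorem laplaceCLM_apply (hM : ∀ t, 0 ≤ t → ‖S.T t‖ ≤ M) (hl : 0 < l.re) (x : X) :
    S.laplaceCLM hM hl x = S.laplace l x :=
  rfl

variable [CompleteSpace X]

theorem T_laplace (hM : ∀ t, 0 ≤ t → ‖S.T t‖ ≤ M) (hl : 0 < l.re) {s : ℝ} (hs : 0 ≤ s)
    (x : X) : S.T s (S.laplace l x) = ∫ t in Ioi (0 : ℝ), cexp (-(l * t)) • S.T (s + t) x := by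
  rw [laplace, ← (S.T s).integral_comp_comm (S.integrableOn_dampedOrbit hM hl x)]
  refine setIntegral_congr_fun measurableSet_Ioi fun t ht => ?_
  simp [dampedOrbit, S.map_add s t hs (le_of_lt ht)]

theorem laplace_T (hM : ∀ t, 0 ≤ t → ‖S.T t‖ ≤ M) (hl : 0 < l.re) {s : ℝ} (hs : 0 ≤ s)
    (x : X) : S.laplace l (S.T s x) = S.T s (S.laplace l x) := by
  rw [S.T_laplace hM hl hs, laplace]
  refine setIntegral_congr_fun measurableSet_Ioi fun t ht => ?_
  simp [dampedOrbit, add_comm s t, S.map_add t s (le_of_lt ht) hs]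

theorem T_laplace_eq_smul_sub (hM : ∀ t, 0 ≤ t → ‖S.T t‖ ≤ M) (hl : 0 < l.re) {s : ℝ}
    (hs : 0 ≤ s) (x : X) :
    S.T s (S.laplace l x) =
      cexp (l * s) • (S.laplace l x - ∫ t in 0..s, S.dampedOrbit l x t) := by
  have hshift :
      ∫ t in Ioi (0 : ℝ), S.dampedOrbit l x (t + s) = ∫ t in Ioi s, S.dampedOrbit l x t := by
    have h := (measurePreserving_add_right volume s).setIntegral_preimage_emb
      (MeasurableEquiv.addRight s).measurableEmbedding (S.dampedOrbit l x) (Ioi s)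
    rwa [preimage_add_const_Ioi, sub_self] at h
  rw [S.T_laplace hM hl hs, laplace, ← intervalIntegral.integral_Ioi_sub_Ioi
    (S.integrableOn_dampedOrbit hM hl x) hs, sub_sub_cancel, ← hshift, ← integral_smul]
  refine setIntegral_congr_fun measurableSet_Ioi fun t _ => ?_
  rw [dampedOrbit, smul_smul, ← Complex.exp_add, add_comm t s]
  push_cast
  ring_nf

theorem tendsto_laplace (hM : ∀ t, 0 ≤ t → ‖S.T t‖ ≤ M) (hl : 0 < l.re) (x : X) :
    Tendsto (fun t : ℝ => (t : ℂ)⁻¹ • (S.T t (S.laplace l x) - S.laplace l x)) (𝓝[>] 0)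
      (𝓝 (l • S.laplace l x - x)) := by
  -- the difference quotient is the slope at `0` of `s ↦ e^{ls} (R x - ∫₀ˢ e^{-lt} T(t) x dt)`
  have hcont := S.continuousOn_dampedOrbit l x
  have hint : HasDerivWithinAt (fun s => ∫ t in 0..s, S.dampedOrbit l x t) x (Ici 0) 0 := by
    simpa [dampedOrbit, S.map_zero] using intervalIntegral.integral_hasDerivWithinAt_right
      (t := Ioi 0) IntervalIntegrable.refl
      ((hcont.mono Ioi_subset_Ici_self).stronglyMeasurableAtFilter_nhdsWithin measurableSet_Ioi 0)
      ((hcont 0 self_mem_Ici).mono Ioi_subset_Ici_self)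
  have hexp : HasDerivWithinAt (fun s : ℝ => cexp (l * s)) l (Ici 0) 0 := by
    simpa using ((hasDerivAt_id (0 : ℝ)).ofReal_comp.const_mul l).cexp.hasDerivWithinAt
  have hderiv : HasDerivWithinAt
      (fun s : ℝ => cexp (l * s) • (S.laplace l x - ∫ t in 0..s, S.dampedOrbit l x t))
      (l • S.laplace l x - x) (Ici 0) 0 :=
    (hexp.smul (hint.const_sub (S.laplace l x))).congr_deriv (by
      rw [ofReal_zero, mul_zero, Complex.exp_zero, one_smul, intervalIntegral.integral_same,
        sub_zero]
      abel)
  rw [hasDerivWithinAt_iff_tendsto_slope, Ici_sdiff_left] at hderiv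
  refine hderiv.congr' (eventually_nhdsWithin_of_forall fun s (hs : 0 < s) => ?_)
  rw [slope_def_module, sub_zero, ← S.T_laplace_eq_smul_sub hM hl hs.le, ← Complex.coe_smul]
  simp

theorem isResolvent_laplaceCLM {A : X →ₗ.[ℂ] X} (hgen : IsGenerator A S)
    (hM : ∀ t, 0 ≤ t → ‖S.T t‖ ≤ M) (hl : 0 < l.re) : IsResolvent A l (S.laplaceCLM hM hl) := by
  refine ⟨fun x => (hgen _ _).2 (S.tendsto_laplace hM hl x), fun x => ?_⟩
  have hAx : Tendsto (fun t : ℝ => S.laplace l ((t : ℂ)⁻¹ • (S.T t x - x))) (𝓝[>] 0)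
      (𝓝 (S.laplace l (A x))) :=
    ((S.laplaceCLM hM hl).continuous.tendsto _).comp ((hgen x (A x)).1 (A.mem_graph x))
  have hlim : S.laplace l (A x) = l • S.laplace l x - x := by
    refine tendsto_nhds_unique (hAx.congr' ?_) (S.tendsto_laplace hM hl x)
    filter_upwards [self_mem_nhdsWithin] with t (ht : 0 < t)
    rw [← laplaceCLM_apply S hM hl, ← laplaceCLM_apply S hM hl, map_smul, map_sub,
      laplaceCLM_apply, laplaceCLM_apply, S.laplace_T hM hl ht.le]
  calc S.laplaceCLM hM hl (l • (x : X) - A x)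
      = l • S.laplace l x - S.laplace l (A x) := by rw [map_sub, map_smul]; rfl
    _ = x := by rw [hlim, sub_sub_cancel]

end

end C0Semigroup

theorem abs_im_sub_le_norm_sub_mul_I (l : ℂ) (ω : ℝ) : |l.im - ω| ≤ ‖l - ω * I‖ := by
  simpa using abs_im_le_norm (l - ω * I)

theorem norm_sub_mul_I_le (l : ℂ) (ω : ℝ) : ‖l - ω * I‖ ≤ |l.re| + |l.im - ω| := by
  simpa using norm_le_abs_re_add_abs_im (l - ω * I)

namespace IsGenerator

variable {X : Type*} [NormedAddCommGroup X] [NormedSpace ℂ X] [CompleteSpace X]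
  {S : C0Semigroup X} {A : X →ₗ.[ℂ] X} {M : ℝ} {l : ℂ}

theorem mem_resolventSet_of_re_pos (hgen : IsGenerator A S)
    (hM : ∀ t, 0 ≤ t → ‖S.T t‖ ≤ M) (hl : 0 < l.re) :
    l ∈ ResolventSet A ∧ ‖resolventOp A l‖ ≤ M / l.re := by
  have h := S.isResolvent_laplaceCLM hgen hM hl
  refine ⟨h.mem_resolventSet, ?_⟩
  rw [h.resolventOp_eq]
  exact LinearMap.mkContinuous_norm_le _
    (div_nonneg ((norm_nonneg _).trans (hM 0 le_rfl)) hl.le) _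

theorem norm_resolventOp_le_of_im_mem (hgen : IsGenerator A S)
    (hM : ∀ t, 0 ≤ t → ‖S.T t‖ ≤ M) (hre : 0 ≤ l.re)
    (him : (l.im : ℂ) * I ∈ ResolventSet A) :
    l ∈ ResolventSet A ∧ ‖resolventOp A l‖ ≤ (1 + M) * ‖resolventOp A (l.im * I)‖ := by
  have hM0 : 0 ≤ M := (norm_nonneg _).trans (hM 0 le_rfl)
  rcases hre.eq_or_lt with hre | hre
  · have hl : l = l.im * I := Complex.ext (by simp [← hre]) (by simp)
    rw [← hl] at him ⊢
    exact ⟨him, le_mul_of_one_le_left (norm_nonneg _) (by linarith)⟩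
  obtain ⟨hl, hRl⟩ := hgen.mem_resolventSet_of_re_pos hM hre
  have hdist : ‖(l.im : ℂ) * I - l‖ = l.re := by
    rw [← norm_neg, neg_sub, show l - l.im * I = (l.re : ℂ) by
      apply Complex.ext <;> simp, norm_real, Real.norm_of_nonneg hre.le]
  have hM' : l.re * ‖resolventOp A l‖ ≤ M := by
    rwa [le_div_iff₀' hre] at hRl
  refine ⟨hl, (norm_resolventOp_le hl him).trans ?_⟩
  rw [hdist, mul_comm (1 + M)]
  gcongr

theorem norm_pow_mul_norm_resolventOp_le_of_abs_im_le_re (hgen : IsGenerator A S)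
    (hM : ∀ t, 0 ≤ t → ‖S.T t‖ ≤ M) {α ω ε : ℝ} (hα : 1 ≤ α) (hl : |l.im - ω| ≤ l.re)
    (hpos : 0 < ‖l - ω * I‖) (hε : ‖l - ω * I‖ ≤ ε) :
    l ∈ ResolventSet A ∧ ‖l - ω * I‖ ^ α * ‖resolventOp A l‖ ≤ 2 * ε ^ (α - 1) * M := by
  set r := ‖l - ω * I‖
  have hM0 : 0 ≤ M := (norm_nonneg _).trans (hM 0 le_rfl)
  have hr : r ≤ 2 * l.re := by
    have := norm_sub_mul_I_le l ω
    rw [abs_of_nonneg ((abs_nonneg _).trans hl)] at this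
    linarith
  have hre : 0 < l.re := by linarith
  obtain ⟨hmem, hR⟩ := hgen.mem_resolventSet_of_re_pos hM hre
  refine ⟨hmem, ?_⟩
  calc r ^ α * ‖resolventOp A l‖ ≤ r ^ α * (M / l.re) := by gcongr
    _ = r ^ (α - 1) * (r / l.re) * M := by
        rw [Real.rpow_sub_one hpos.ne']
        field_simp
    _ ≤ ε ^ (α - 1) * 2 * M := by
        gcongr
        · exact Real.rpow_nonneg (hpos.le.trans hε) _
        · rwa [div_le_iff₀ hre]
    _ = 2 * ε ^ (α - 1) * M := by ring

theorem norm_pow_mul_norm_resolventOp_le_of_re_lt_abs_im (hgen : IsGenerator A S)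
    (hM : ∀ t, 0 ≤ t → ‖S.T t‖ ≤ M) {α ω C : ℝ} (hα : 0 ≤ α) (hre : 0 ≤ l.re)
    (hl : l.re < |l.im - ω|) (him : (l.im : ℂ) * I ∈ ResolventSet A)
    (hC : |l.im - ω| ^ α * ‖resolventOp A (l.im * I)‖ ≤ C) :
    l ∈ ResolventSet A ∧ ‖l - ω * I‖ ^ α * ‖resolventOp A l‖ ≤ 2 ^ α * (1 + M) * C := by
  have hM0 : 0 ≤ M := (norm_nonneg _).trans (hM 0 le_rfl)
  have hr : ‖l - ω * I‖ ≤ 2 * |l.im - ω| := by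
    have := norm_sub_mul_I_le l ω
    rw [abs_of_nonneg hre] at this
    linarith
  obtain ⟨hmem, hR⟩ := hgen.norm_resolventOp_le_of_im_mem hM hre him
  refine ⟨hmem, ?_⟩
  calc ‖l - ω * I‖ ^ α * ‖resolventOp A l‖
      ≤ (2 * |l.im - ω|) ^ α * ((1 + M) * ‖resolventOp A (l.im * I)‖) := by gcongr
    _ = 2 ^ α * (1 + M) * (|l.im - ω| ^ α * ‖resolventOp A (l.im * I)‖) := by
        rw [Real.mul_rpow zero_le_two (abs_nonneg _)]
        ring
    _ ≤ 2 ^ α * (1 + M) * C := by gcongr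

end IsGenerator

section ImaginaryAxis

variable {X : Type*} [NormedAddCommGroup X] [NormedSpace ℂ X] {A : X →ₗ.[ℂ] X}
  {ι : Type*} {ωk : ι → ℝ}

theorem mem_resolventSet_of_forall_ne
    (hspec : {l : ℂ | l ∉ ResolventSet A ∧ l.re = 0} = range fun k => (ωk k : ℂ) * I)
    {ω : ℝ} (hω : ∀ k, ωk k ≠ ω) : (ω : ℂ) * I ∈ ResolventSet A := by
  by_contra h
  have hmem : (ω : ℂ) * I ∈ {l : ℂ | l ∉ ResolventSet A ∧ l.re = 0} := ⟨h, by simp⟩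
  rw [hspec] at hmem
  obtain ⟨k, hk⟩ := hmem
  exact hω k (by simpa using hk)

/-- If `iω ∉ ρ(A)`, then at the point `iω'` at distance `s d` from `iω` on the segment towards
`iω_k` the resolvent is at least `1 / (s d)` but, by hypothesis, at most `C / ((1 - s) d) ^ α`,
which is impossible for small `s > 0`. -/
theorem mem_resolventSet_of_abs_sub_le [CompleteSpace X] [Finite ι]
    (hspec : {l : ℂ | l ∉ ResolventSet A ∧ l.re = 0} = range fun k => (ωk k : ℂ) * I)
    {α C ε : ℝ} (hres : ∀ k ω, 0 < |ω - ωk k| → |ω - ωk k| ≤ ε →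
      |ω - ωk k| ^ α * ‖resolventOp A ((ω : ℂ) * I)‖ ≤ C)
    {k : ι} {ω : ℝ} (h0 : 0 < |ω - ωk k|) (hε : |ω - ωk k| ≤ ε) :
    (ω : ℂ) * I ∈ ResolventSet A := by
  by_contra hω
  set d := |ω - ωk k|
  set ω' : ℝ → ℝ := fun s => ω + s * (ωk k - ω)
  have hk : ωk k - ω ≠ 0 := fun h => by simp [d, abs_sub_comm ω, h] at h0
  have hdist_k : ∀ s, s < 1 → |ω' s - ωk k| = (1 - s) * d := fun s hs => by
    rw [show ω' s - ωk k = (1 - s) * (ω - ωk k) by ring, abs_mul,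
      abs_of_pos (sub_pos.2 hs)]
  have hdist : ∀ s, 0 < s → ‖(ω' s : ℂ) * I - ω * I‖ = s * d := fun s hs => by
    rw [← sub_mul, ← ofReal_sub, norm_mul, norm_I, mul_one, norm_real, Real.norm_eq_abs,
      show ω' s - ω = s * -(ω - ωk k) by ring, abs_mul, abs_neg, abs_of_pos hs]
  have hto0 : Tendsto (fun s : ℝ => s) (𝓝[>] 0) (𝓝 0) :=
    tendsto_nhdsWithin_of_tendsto_nhds tendsto_id
  have hmem : ∀ᶠ s in 𝓝[>] 0, (ω' s : ℂ) * I ∈ ResolventSet A := by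
    refine (eventually_all.2 fun n => ?_).mono fun s hs => mem_resolventSet_of_forall_ne hspec hs
    by_cases hn : ωk n = ω
    · filter_upwards [self_mem_nhdsWithin] with s (hs : 0 < s)
      simp [ω', hn, hs.ne', hk]
    · have hω' : Tendsto ω' (𝓝[>] 0) (𝓝 ω) := by
        simpa [ω'] using tendsto_const_nhds.add (hto0.mul_const (ωk k - ω))
      exact (hω'.eventually_ne (Ne.symm hn)).mono fun s hs => Ne.symm hs
  have hbound : ∀ᶠ s in 𝓝[>] 0, ((1 - s) * d) ^ α ≤ s * d * C := by
    filter_upwards [hmem, Ioo_mem_nhdsGT one_pos] with s hs ⟨hs0, hs1⟩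
    have hlow := one_le_norm_sub_mul_norm_resolventOp hs hω
    have hd : 0 < (1 - s) * d := mul_pos (by linarith) h0
    have hup := hres k (ω' s) (by rwa [hdist_k s hs1]) (by
      rw [hdist_k s hs1]; nlinarith)
    rw [hdist s hs0] at hlow
    rw [hdist_k s hs1] at hup
    have hpow := Real.rpow_pos_of_pos hd α
    calc ((1 - s) * d) ^ α ≤ ((1 - s) * d) ^ α * (s * d * ‖resolventOp A (ω' s * I)‖) :=
          le_mul_of_one_le_right hpow.le hlow
      _ = s * d * (((1 - s) * d) ^ α * ‖resolventOp A (ω' s * I)‖) := by ring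
      _ ≤ s * d * C := by gcongr
  have hlim : ∀ᶠ s in 𝓝[>] 0, s * d * C < ((1 - s) * d) ^ α := by
    refine Tendsto.eventually_lt (y := 0) (z := d ^ α) ?_ ?_ (Real.rpow_pos_of_pos h0 α)
    · simpa using (hto0.mul_const d).mul_const C
    · have h1 : Tendsto (fun s : ℝ => (1 - s) * d) (𝓝[>] 0) (𝓝 d) := by
        simpa using ((tendsto_const_nhds (x := (1 : ℝ))).sub hto0).mul_const d
      exact h1.rpow_const (Or.inl h0.ne')
  obtain ⟨s, hle, hlt⟩ := (hbound.and hlim).exists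
  linarith

end ImaginaryAxis

theorem stmt8_general
    {X : Type*} [NormedAddCommGroup X] [InnerProductSpace ℂ X] [CompleteSpace X]
    (S : C0Semigroup X) (A : X →ₗ.[ℂ] X)
    (hgen : IsGenerator A S) (hstab : StronglyStable S)
    {ι : Type*} [Fintype ι] (ωk : ι → ℝ)
    (hspec : {l : ℂ | l ∉ ResolventSet A ∧ l.re = 0} =
      Set.range fun k : ι => (ωk k : ℂ) * Complex.I)
    (α MA εA : ℝ) (hα : 1 ≤ α)
    (hres1 : ∀ k : ι, ∀ ω : ℝ, 0 < |ω - ωk k| → |ω - ωk k| ≤ εA →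
      |ω - ωk k| ^ α * ‖resolventOp A ((ω : ℂ) * Complex.I)‖ ≤ MA)
 :
    ∃ M0 : ℝ, 1 ≤ M0 ∧ ∀ k : ι, ∀ l : ℂ, 0 ≤ l.re →
      0 < ‖l - (ωk k : ℂ) * Complex.I‖ → ‖l - (ωk k : ℂ) * Complex.I‖ ≤ εA →
      l ∈ ResolventSet A ∧
      ‖l - (ωk k : ℂ) * Complex.I‖ ^ α * ‖resolventOp A l‖ ≤ M0 := by
  obtain ⟨M, hM⟩ := hstab.uniformlyBounded
  refine ⟨max 1 (max (2 * εA ^ (α - 1) * M) (2 ^ α * (1 + M) * MA)), le_max_left _ _, ?_⟩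
  intro k l hre hpos hle
  rcases le_or_gt |l.im - ωk k| l.re with hsector | hnear
  · obtain ⟨hmem, hbound⟩ :=
      hgen.norm_pow_mul_norm_resolventOp_le_of_abs_im_le_re hM hα hsector hpos hle
    exact ⟨hmem, hbound.trans ((le_max_left _ _).trans (le_max_right _ _))⟩
  · have hδ0 : 0 < |l.im - ωk k| := hre.trans_lt hnear
    have hδ : |l.im - ωk k| ≤ εA := (abs_im_sub_le_norm_sub_mul_I l (ωk k)).trans hle
    obtain ⟨hmem, hbound⟩ := hgen.norm_pow_mul_norm_resolventOp_le_of_re_lt_abs_im hM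
      (by linarith) hre hnear (mem_resolventSet_of_abs_sub_le hspec hres1 hδ0 hδ)
      (hres1 k l.im hδ0 hδ)
    exact ⟨hmem, hbound.trans ((le_max_right _ _).trans (le_max_right _ _))⟩

/-- (Lemma 3.5 of the paper.)  Under Assumption (A) the bound
`|λ - iω_k|^α ‖R(λ,A)‖ ≤ M₀` holds uniformly on the sets
`Ω_k = {λ : Re λ ≥ 0, 0 < |λ - iω_k| ≤ ε_A}`, with `M₀` independent of `k`. -/
theorem stmt8
    {X : Type*} [NormedAddCommGroup X] [InnerProductSpace ℂ X] [CompleteSpace X]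
    (S : C0Semigroup X) (A : X →ₗ.[ℂ] X)
    (hgen : IsGenerator A S) (hstab : StronglyStable S)
    {ι : Type*} [Fintype ι] (ωk : ι → ℝ)
    (dA : ℝ) (hdA : 0 < dA) (hgap : ∀ k l : ι, k ≠ l → dA ≤ |ωk k - ωk l|)
    (hspec : {l : ℂ | l ∉ ResolventSet A ∧ l.re = 0} =
      Set.range fun k : ι => (ωk k : ℂ) * Complex.I)
    (hcont : ∀ k : ι, ((ωk k : ℂ) * Complex.I) ∈ ContinuousSpectrum A)
    (α MA εA : ℝ) (hα : 1 ≤ α) (hMA : 0 < MA)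
    (hεA : 0 < εA) (hεA' : εA ≤ max 1 (dA / 3))
    (hres1 : ∀ k : ι, ∀ ω : ℝ, 0 < |ω - ωk k| → |ω - ωk k| ≤ εA →
      |ω - ωk k| ^ α * ‖resolventOp A ((ω : ℂ) * Complex.I)‖ ≤ MA)
    (hres2 : ∀ ω : ℝ, (∀ k : ι, εA < |ω - ωk k|) →
      ‖resolventOp A ((ω : ℂ) * Complex.I)‖ ≤ MA)
 :
    ∃ M0 : ℝ, 1 ≤ M0 ∧ ∀ k : ι, ∀ l : ℂ, 0 ≤ l.re →
      0 < ‖l - (ωk k : ℂ) * Complex.I‖ → ‖l - (ωk k : ℂ) * Complex.I‖ ≤ εA →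
      l ∈ ResolventSet A ∧
      ‖l - (ωk k : ℂ) * Complex.I‖ ^ α * ‖resolventOp A l‖ ≤ M0 :=
  stmt8_general S A hgen hstab ωk hspec α MA εA hα hres1
end

section
/- Let Ω = {λ ∈ ℂ : |λ + 1| ≤ 1} and let A be the bounded multiplication operator (Af)(μ) = μ f(μ) on X = L²(Ω). Then for α > 0 one has sup_{0<|ω|≤1} |ω|^α ‖R(iω,A)‖ < ∞ if and only if α ≥ 2; in particular |ω|^α ‖R(iω,A)‖ = |ω|^α (√(ω²+1) + 1)/ω² for 0 < |ω| ≤ 1. -/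
open Complex Filter Topology MeasureTheory

/-!
For `l` off the closed disk `Ω`, `l - A` is multiplication by `l - z`, which is bounded below by
`d = dist(l, Ω)` on `Ω`; so the resolvent is multiplication by `(l - z)⁻¹` and has norm at most
`d⁻¹`. Conversely, every ball of radius `c > d` around `l` meets `Ω` in a set of positive measure,
and on its indicator `l - A` has norm at most `c`, so `‖R(l, A)‖ ≥ c⁻¹`. For `l = iω` this gives
`‖R(iω, A)‖ = (√(ω² + 1) - 1)⁻¹ = (√(ω² + 1) + 1) / ω²`, which is of order `|ω|⁻²` near `0`.
-/

open scoped ENNReal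

theorem inv_le_norm_resolvent_of_norm_sub_apply_le {E : Type*} [NormedAddCommGroup E]
    [NormedSpace ℂ E] {A : E →L[ℂ] E} {l : ℂ}
    (hl : l ∈ resolventSet ℂ A) {f : E} (hf : f ≠ 0) {c : ℝ} (hc : 0 < c)
    (hfc : ‖(algebraMap ℂ (E →L[ℂ] E) l - A) f‖ ≤ c * ‖f‖) :
    c⁻¹ ≤ ‖resolvent A l‖ := by
  have hinv : resolvent A l * (algebraMap ℂ (E →L[ℂ] E) l - A) = 1 :=
    Ring.inverse_mul_cancel _ (spectrum.mem_resolventSet_iff.mp hl)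
  have : 1 * ‖f‖ ≤ (‖resolvent A l‖ * c) * ‖f‖ :=
    calc 1 * ‖f‖ = ‖resolvent A l ((algebraMap ℂ (E →L[ℂ] E) l - A) f)‖ := by
          rw [← mul_apply_eq_comp, hinv, one_apply_eq_self, one_mul]
      _ ≤ ‖resolvent A l‖ * (c * ‖f‖) := (resolvent A l).le_of_opNorm_le le_rfl _ |>.trans
          (by gcongr)
      _ = (‖resolvent A l‖ * c) * ‖f‖ := by ring
  exact (inv_le_iff_one_le_mul₀ hc).mpr (le_of_mul_le_mul_right this (norm_pos_iff.mpr hf))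

section MultiplicationOperator

variable {μ : Measure ℂ} {p : ℝ≥0∞} [Fact (1 ≤ p)] {A : Lp ℂ p μ →L[ℂ] Lp ℂ p μ}

theorem coeFn_algebraMap_sub_apply (hA : ∀ f : Lp ℂ p μ, A f =ᵐ[μ] fun z => z * f z)
    (l : ℂ) (f : Lp ℂ p μ) :
    (algebraMap ℂ (Lp ℂ p μ →L[ℂ] Lp ℂ p μ) l - A) f =ᵐ[μ] fun z => (l - z) * f z := by
  rw [sub_apply, Algebra.algebraMap_eq_smul_one, smul_apply, one_apply_eq_self]
  filter_upwards [Lp.coeFn_sub (l • f) (A f), Lp.coeFn_smul l f, hA f] with z h₁ h₂ h₃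
  rw [h₁, Pi.sub_apply, h₂, h₃, Pi.smul_apply, smul_eq_mul, sub_mul]

theorem exists_norm_le_inverse_algebraMap_sub
    (hA : ∀ f : Lp ℂ p μ, A f =ᵐ[μ] fun z => z * f z) {l : ℂ} {d : ℝ} (hd : 0 < d)
    (hl : ∀ᵐ z ∂μ, d ≤ ‖l - z‖) :
    ∃ R : Lp ℂ p μ →L[ℂ] Lp ℂ p μ, ‖R‖ ≤ d⁻¹ ∧
      (algebraMap ℂ _ l - A) * R = 1 ∧ R * (algebraMap ℂ _ l - A) = 1 := by
  have hbound : ∀ᵐ z ∂μ, ‖(l - z)⁻¹‖ ≤ d⁻¹ := by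
    filter_upwards [hl] with z hz
    rw [norm_inv]
    exact inv_anti₀ hd hz
  have hg : MemLp (fun z => (l - z)⁻¹) ∞ μ :=
    memLp_top_of_bound (by fun_prop) d⁻¹ hbound
  -- multiplication by `(l - z)⁻¹`, through the Hölder pairing `L^∞ × L^p → L^p`
  let R := (ContinuousLinearMap.mul ℂ ℂ).holderL μ ∞ p p hg.toLp
  have hR : ∀ f, R f =ᵐ[μ] fun z => (l - z)⁻¹ * f z := fun f => by
    filter_upwards [ContinuousLinearMap.coeFn_holder (ContinuousLinearMap.mul ℂ ℂ) (r := p)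
      hg.toLp f, hg.coeFn_toLp] with z h₁ h₂
    rw [ContinuousLinearMap.holderL_apply_apply, h₁, h₂, ContinuousLinearMap.mul_apply']
  have hne : ∀ᵐ z ∂μ, l - z ≠ 0 := by
    filter_upwards [hl] with z hz
    exact norm_pos_iff.mp (hd.trans_le hz)
  refine ⟨R, ?_, ?_, ?_⟩
  · refine ContinuousLinearMap.opNorm_le_bound _ (inv_nonneg.mpr hd.le) fun f => ?_
    refine Lp.norm_le_mul_norm_of_ae_le_mul ?_
    filter_upwards [hR f, hbound] with z h₁ h₂
    rw [h₁, norm_mul]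
    gcongr
  · refine ContinuousLinearMap.ext fun f => Lp.ext ?_
    filter_upwards [coeFn_algebraMap_sub_apply hA l (R f), hR f, hne] with z h₁ h₂ h₃
    rw [mul_apply_eq_comp, one_apply_eq_self, h₁, h₂, mul_inv_cancel_left₀ h₃]
  · refine ContinuousLinearMap.ext fun f => Lp.ext ?_
    filter_upwards [hR _, coeFn_algebraMap_sub_apply hA l f, hne] with z h₁ h₂ h₃
    rw [mul_apply_eq_comp, one_apply_eq_self, h₁, h₂, inv_mul_cancel_left₀ h₃]

theorem inv_le_norm_resolvent_of_measure_ball_pos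
    (hA : ∀ f : Lp ℂ p μ, A f =ᵐ[μ] fun z => z * f z) {l : ℂ} (hl : l ∈ resolventSet ℂ A)
    {c : ℝ} (hc : 0 < c) (hpos : 0 < μ (Metric.ball l c)) (hfin : μ (Metric.ball l c) ≠ ∞) :
    c⁻¹ ≤ ‖resolvent A l‖ := by
  let f := indicatorConstLp p measurableSet_ball hfin (1 : ℂ)
  have hf : f ≠ 0 := by
    rw [← norm_pos_iff, norm_indicatorConstLp' (zero_lt_one.trans_le Fact.out).ne' hpos.ne']
    simpa [measureReal_def] using Real.rpow_pos_of_pos (ENNReal.toReal_pos hpos.ne' hfin) _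
  refine inv_le_norm_resolvent_of_norm_sub_apply_le hl hf hc
    (Lp.norm_le_mul_norm_of_ae_le_mul ?_)
  have hf₀ : ∀ᵐ z ∂μ, z ∉ Metric.ball l c → f z = 0 := indicatorConstLp_coeFn_notMem
  filter_upwards [coeFn_algebraMap_sub_apply hA l f, hf₀] with z h₁ h₂
  rw [h₁, norm_mul]
  by_cases hz : z ∈ Metric.ball l c
  · gcongr
    rw [← dist_eq_norm, dist_comm]
    exact (Metric.mem_ball.mp hz).le
  · rw [h₂ hz, norm_zero, mul_zero, mul_zero]

theorem norm_resolvent_eq_inv (hA : ∀ f : Lp ℂ p μ, A f =ᵐ[μ] fun z => z * f z)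
    [IsFiniteMeasure μ] {l : ℂ} {d : ℝ} (hd : 0 < d) (hl : ∀ᵐ z ∂μ, d ≤ ‖l - z‖)
    (hpos : ∀ c, d < c → 0 < μ (Metric.ball l c)) :
    ‖resolvent A l‖ = d⁻¹ := by
  obtain ⟨R, hR, hR₁, hR₂⟩ := exists_norm_le_inverse_algebraMap_sub hA hd hl
  have hmem : l ∈ resolventSet ℂ A := ⟨⟨_, R, hR₁, hR₂⟩, rfl⟩
  have hres : resolvent A l = R := Ring.inverse_unit ⟨_, R, hR₁, hR₂⟩
  refine le_antisymm (hres ▸ hR) (le_of_forall_lt_imp_le_of_dense fun b hb => ?_)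
  rcases le_or_gt b 0 with hb₀ | hb₀
  · exact hb₀.trans (norm_nonneg _)
  · simpa using inv_le_norm_resolvent_of_measure_ball_pos hA hmem (inv_pos.2 hb₀)
      (hpos _ ((lt_inv_comm₀ hb₀ hd).mp hb)) (measure_ne_top _ _)

end MultiplicationOperator

theorem measure_ball_inter_closedBall_pos {E : Type*} [NormedAddCommGroup E] [NormedSpace ℝ E]
    [MeasurableSpace E] [OpensMeasurableSpace E] {μ : Measure E} [μ.IsOpenPosMeasure]
    {x y : E} {r s : ℝ} (hs : 0 < s) (hr : 0 < r) (h : dist x y < s + r) :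
    0 < μ (Metric.ball x s ∩ Metric.closedBall y r) := by
  have hne : (Metric.ball x s ∩ Metric.ball y r).Nonempty :=
    Set.not_disjoint_iff_nonempty_inter.mp fun hdisj =>
      h.not_ge ((disjoint_ball_ball_iff hs hr).mp hdisj)
  exact (Metric.isOpen_ball.inter Metric.isOpen_ball).measure_pos μ hne |>.trans_le <|
    measure_mono (Set.inter_subset_inter_right _ Metric.ball_subset_closedBall)

theorem norm_resolvent_eq_inv_dist_sub {p : ℝ≥0∞} [Fact (1 ≤ p)] {c : ℂ} {r : ℝ}
    {A : Lp ℂ p (volume.restrict (Metric.closedBall c r)) →L[ℂ]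
      Lp ℂ p (volume.restrict (Metric.closedBall c r))}
    (hA : ∀ f, A f =ᵐ[volume.restrict (Metric.closedBall c r)] fun z => z * f z)
    (hr : 0 < r) {l : ℂ} (hl : r < dist l c) :
    ‖resolvent A l‖ = (dist l c - r)⁻¹ := by
  have : IsFiniteMeasure (volume.restrict (Metric.closedBall c r)) :=
    isFiniteMeasure_restrict.mpr measure_closedBall_lt_top.ne
  refine norm_resolvent_eq_inv hA (sub_pos.mpr hl) ?_ fun s hs => ?_
  · filter_upwards [ae_restrict_mem Metric.isClosed_closedBall.measurableSet] with z hz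
    have := dist_triangle l z c
    rw [Metric.mem_closedBall] at hz
    rw [← dist_eq_norm]
    linarith
  · rw [Measure.restrict_apply Metric.isOpen_ball.measurableSet]
    exact measure_ball_inter_closedBall_pos (by linarith) hr (by linarith)

theorem dist_ofReal_mul_I_neg_one (ω : ℝ) : dist ((ω : ℂ) * I) (-1) = √(ω ^ 2 + 1) := by
  rw [dist_eq_norm, sub_neg_eq_add, Complex.norm_def, Complex.normSq_apply]
  congr 1
  simp
  ring

theorem one_lt_sqrt_sq_add_one {ω : ℝ} (hω : ω ≠ 0) : 1 < √(ω ^ 2 + 1) :=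
  Real.lt_sqrt_of_sq_lt (by rw [one_pow]; exact lt_add_of_pos_left 1 (by positivity))

theorem inv_sqrt_sq_add_one_sub_one {ω : ℝ} (hω : ω ≠ 0) :
    (√(ω ^ 2 + 1) - 1)⁻¹ = (√(ω ^ 2 + 1) + 1) / ω ^ 2 := by
  have hsq : √(ω ^ 2 + 1) ^ 2 = ω ^ 2 + 1 := Real.sq_sqrt (by positivity)
  have hgt := one_lt_sqrt_sq_add_one hω
  rw [inv_eq_iff_eq_inv, inv_div, eq_div_iff (by linarith)]
  nlinarith

theorem abs_rpow_mul_div_sq (α a : ℝ) {ω : ℝ} (hω : 0 < |ω|) :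
    |ω| ^ α * (a / ω ^ 2) = |ω| ^ (α - 2) * a := by
  rw [← sq_abs, Real.rpow_sub hω, ← Real.rpow_natCast]
  ring_nf

theorem exists_bound_abs_rpow_mul_div_sq_iff (α : ℝ) :
    (∃ M : ℝ, ∀ ω : ℝ, 0 < |ω| → |ω| ≤ 1 →
      |ω| ^ α * ((√(ω ^ 2 + 1) + 1) / ω ^ 2) ≤ M) ↔ 2 ≤ α := by
  constructor
  · rintro ⟨M, hM⟩
    by_contra! hα
    have hlarge : ∀ᶠ x in 𝓝[>] (0 : ℝ), M / 2 < x ^ (α - 2) ∧ x ≤ 1 :=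
      ((tendsto_rpow_neg_nhdsGT_zero (by linarith)).eventually_gt_atTop _).and
        (mem_of_superset (Ioc_mem_nhdsGT zero_lt_one) fun _ hx => hx.2)
    obtain ⟨x, ⟨hMx, hx₁⟩, hx₀ : 0 < x⟩ := (hlarge.and self_mem_nhdsWithin).exists
    have habs : |x| = x := abs_of_pos hx₀
    have hsqrt : 1 ≤ √(x ^ 2 + 1) := Real.one_le_sqrt.mpr (by nlinarith)
    have := hM x (by rwa [habs]) (by rwa [habs])
    rw [abs_rpow_mul_div_sq α _ (by rwa [habs]), habs] at this
    nlinarith [Real.rpow_pos_of_pos hx₀ (α - 2)]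
  · intro hα
    refine ⟨3, fun ω hω₀ hω₁ => ?_⟩
    have hsqrt : √(ω ^ 2 + 1) ≤ 2 :=
      Real.sqrt_le_iff.mpr ⟨by norm_num, by nlinarith [sq_abs ω, abs_nonneg ω]⟩
    rw [abs_rpow_mul_div_sq α _ hω₀]
    calc |ω| ^ (α - 2) * (√(ω ^ 2 + 1) + 1) ≤ 1 * 3 := by
          gcongr
          exacts [Real.rpow_le_one (abs_nonneg ω) hω₁ (by linarith), by linarith]
      _ = 3 := one_mul 3

theorem stmt16_general
    (Ω : Set ℂ) (hΩ : Ω = {z : ℂ | ‖z + 1‖ ≤ 1})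
    (ν : Measure ℂ) (hν : ν = volume.restrict Ω)
    (A : Lp ℂ 2 ν →L[ℂ] Lp ℂ 2 ν)
    (hA : ∀ f : Lp ℂ 2 ν, A f =ᵐ[ν] fun z => z * f z)
    (α : ℝ) :
    ((∃ M : ℝ, ∀ ω : ℝ, 0 < |ω| → |ω| ≤ 1 →
        |ω| ^ α * ‖resolvent A ((ω : ℂ) * Complex.I)‖ ≤ M) ↔ 2 ≤ α) ∧
    (∀ ω : ℝ, 0 < |ω| → |ω| ≤ 1 →
      |ω| ^ α * ‖resolvent A ((ω : ℂ) * Complex.I)‖ =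
        |ω| ^ α * (Real.sqrt (ω ^ 2 + 1) + 1) / ω ^ 2) := by
  have hΩ' : Ω = Metric.closedBall (-1) 1 := by
    rw [hΩ]
    ext z
    simp [dist_eq_norm]
  subst hν hΩ'
  have hR : ∀ ω : ℝ, 0 < |ω| →
      ‖resolvent A ((ω : ℂ) * I)‖ = (√(ω ^ 2 + 1) + 1) / ω ^ 2 := fun ω hω => by
    have hω₀ := abs_pos.mp hω
    rw [norm_resolvent_eq_inv_dist_sub hA one_pos
        (by simpa [dist_ofReal_mul_I_neg_one] using one_lt_sqrt_sq_add_one hω₀),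
      dist_ofReal_mul_I_neg_one, inv_sqrt_sq_add_one_sub_one hω₀]
  refine ⟨?_, fun ω hω _ => by rw [hR ω hω, mul_div_assoc]⟩
  rw [← exists_bound_abs_rpow_mul_div_sq_iff α]
  refine exists_congr fun M => forall_congr' fun ω => forall_congr' fun hω => ?_
  rw [hR ω hω]

/-- For the multiplication operator `(Af)(μ) = μ f(μ)` on `L²(Ω)` with
`Ω` the closed unit disk centered at `-1`, the bound `sup_{0<|ω|≤1} |ω|^α ‖R(iω,A)‖ < ∞`
holds if and only if `α ≥ 2`, and
`|ω|^α ‖R(iω,A)‖ = |ω|^α (√(ω²+1)+1)/ω²` for `0 < |ω| ≤ 1`. -/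
theorem stmt16
    (Ω : Set ℂ) (hΩ : Ω = {z : ℂ | ‖z + 1‖ ≤ 1})
    (ν : Measure ℂ) (hν : ν = volume.restrict Ω)
    (A : Lp ℂ 2 ν →L[ℂ] Lp ℂ 2 ν)
    (hA : ∀ f : Lp ℂ 2 ν, A f =ᵐ[ν] fun z => z * f z)
    (α : ℝ) (hα : 0 < α) :
    ((∃ M : ℝ, ∀ ω : ℝ, 0 < |ω| → |ω| ≤ 1 →
        |ω| ^ α * ‖resolvent A ((ω : ℂ) * Complex.I)‖ ≤ M) ↔ 2 ≤ α) ∧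
    (∀ ω : ℝ, 0 < |ω| → |ω| ≤ 1 →
      |ω| ^ α * ‖resolvent A ((ω : ℂ) * Complex.I)‖ =
        |ω| ^ α * (Real.sqrt (ω ^ 2 + 1) + 1) / ω ^ 2) :=
  stmt16_general Ω hΩ ν hν A hA α
end

section
/- Let Ω = {λ ∈ ℂ : |λ + 1| ≤ 1} and let A be the bounded multiplication operator (Af)(μ) = μ f(μ) on X = L²(Ω). Then for all λ with Re λ ≥ 0 and λ ≠ 0 one has ‖(−A)² R(λ,A)‖ ≤ 8, i.e. ‖A² R(λ,A)‖ ≤ 8. -/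
open Complex Filter Topology MeasureTheory

/-! On `Ω` one has `|μ|² ≤ -2 Re μ`, so for `Re λ ≥ 0` we get `|μ|² ≤ 2 Re (λ - μ) ≤ 2 |λ - μ|`.
This forces `λ ∉ Ω`, and since `|λ - μ| ≥ |λ + 1| - 1 > 0` on `Ω`, the resolvent `R(λ, A)` is
multiplication by `(λ - μ)⁻¹`. Hence `A² R(λ, A)` is multiplication by `μ² / (λ - μ)`, of norm
at most `2`. -/

section MultiplicationOperator

open scoped ENNReal

variable {α 𝕜 : Type*} [MeasurableSpace α] {μ : Measure α} [NontriviallyNormedField 𝕜]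
  {p : ℝ≥0∞} [Fact (1 ≤ p)]

def IsMultiplicationOperator (T : Lp 𝕜 p μ →L[𝕜] Lp 𝕜 p μ) (m : α → 𝕜) : Prop :=
  ∀ f : Lp 𝕜 p μ, T f =ᵐ[μ] fun x => m x * f x

theorem isMultiplicationOperator_one : IsMultiplicationOperator (1 : Lp 𝕜 p μ →L[𝕜] _) 1 :=
  fun f => .of_forall fun x => (one_mul (f x)).symm

theorem exists_isMultiplicationOperator {m : α → 𝕜} (hm : AEStronglyMeasurable m μ) {C : ℝ}
    (hC : ∀ᵐ x ∂μ, ‖m x‖ ≤ C) : ∃ T : Lp 𝕜 p μ →L[𝕜] _, IsMultiplicationOperator T m := by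
  have hmem := memLp_top_of_bound hm C hC
  refine ⟨(ContinuousLinearMap.mul 𝕜 𝕜).holderL μ ∞ p p hmem.toLp, fun f => ?_⟩
  filter_upwards [(ContinuousLinearMap.mul 𝕜 𝕜).coeFn_holder (r := p) hmem.toLp f,
    hmem.coeFn_toLp] with x hx hxm
  simp [hx, hxm]

namespace IsMultiplicationOperator

variable {T S : Lp 𝕜 p μ →L[𝕜] Lp 𝕜 p μ} {m n : α → 𝕜}

theorem mul (hT : IsMultiplicationOperator T m) (hS : IsMultiplicationOperator S n) :
    IsMultiplicationOperator (T * S) (m * n) := fun f => by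
  filter_upwards [hT (S f), hS f] with x hTx hSx
  simp [hTx, hSx, mul_assoc]

theorem algebraMap_sub (hT : IsMultiplicationOperator T m) (l : 𝕜) :
    IsMultiplicationOperator (algebraMap 𝕜 _ l - T) fun x => l - m x := fun f => by
  filter_upwards [Lp.coeFn_sub (l • f) (T f), Lp.coeFn_smul l f, hT f] with x hsub hsmul hTx
  simp only [sub_apply, Algebra.algebraMap_eq_smul_one, smul_apply, one_apply_eq_self]
  rw [hsub, Pi.sub_apply, hsmul, hTx, Pi.smul_apply, smul_eq_mul, sub_mul]

theorem eq_of_ae_eq (hT : IsMultiplicationOperator T m) (hS : IsMultiplicationOperator S n)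
    (hmn : m =ᵐ[μ] n) : T = S := by
  ext f : 1
  refine Lp.ext ?_
  filter_upwards [hT f, hS f, hmn] with x hTx hSx hx
  rw [hTx, hSx, hx]

theorem norm_le (hT : IsMultiplicationOperator T m) {C : ℝ} (hC₀ : 0 ≤ C)
    (hC : ∀ᵐ x ∂μ, ‖m x‖ ≤ C) : ‖T‖ ≤ C := by
  refine T.opNorm_le_bound hC₀ fun f => Lp.norm_le_mul_norm_of_ae_le_mul ?_
  filter_upwards [hT f, hC] with x hTx hx
  rw [hTx, norm_mul]
  exact mul_le_mul_of_nonneg_right hx (norm_nonneg _)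

theorem resolvent (hT : IsMultiplicationOperator T m) {l : 𝕜}
    (hne : ∀ᵐ x ∂μ, l - m x ≠ 0) (hmeas : AEStronglyMeasurable (fun x => (l - m x)⁻¹) μ)
    {C : ℝ} (hC : ∀ᵐ x ∂μ, ‖(l - m x)⁻¹‖ ≤ C) :
    IsMultiplicationOperator (resolvent T l) fun x => (l - m x)⁻¹ := by
  obtain ⟨R, hR⟩ := exists_isMultiplicationOperator (p := p) hmeas hC
  have hinv : (fun x => (l - m x)⁻¹ * (l - m x)) =ᵐ[μ] 1 := by
    filter_upwards [hne] with x hx using inv_mul_cancel₀ hx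
  have hinv' : (fun x => (l - m x) * (l - m x)⁻¹) =ᵐ[μ] 1 := by
    filter_upwards [hne] with x hx using mul_inv_cancel₀ hx
  have hunit : (algebraMap 𝕜 _ l - T) * R = 1 ∧ R * (algebraMap 𝕜 _ l - T) = 1 :=
    ⟨((hT.algebraMap_sub l).mul hR).eq_of_ae_eq isMultiplicationOperator_one hinv',
      (hR.mul (hT.algebraMap_sub l)).eq_of_ae_eq isMultiplicationOperator_one hinv⟩
  rwa [_root_.resolvent, Ring.inverse_unit ⟨_, R, hunit.1, hunit.2⟩]

end IsMultiplicationOperator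

end MultiplicationOperator

section UnitDiskAtMinusOne

variable {z l : ℂ}

theorem norm_add_one_sq (w : ℂ) : ‖w + 1‖ ^ 2 = ‖w‖ ^ 2 + 2 * w.re + 1 := by
  simp only [Complex.sq_norm, Complex.normSq_apply, add_re, add_im, one_re, one_im]
  ring

theorem norm_sq_le_neg_two_mul_re (hz : ‖z + 1‖ ≤ 1) : ‖z‖ ^ 2 ≤ -(2 * z.re) := by
  nlinarith [norm_add_one_sq z, norm_nonneg (z + 1)]

theorem norm_sq_le_two_mul_norm_sub (hz : ‖z + 1‖ ≤ 1) (hl : 0 ≤ l.re) :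
    ‖z‖ ^ 2 ≤ 2 * ‖l - z‖ := by
  linarith [norm_sq_le_neg_two_mul_re hz, re_le_norm (l - z), sub_re l z]

theorem sub_ne_zero_of_norm_add_one_le (hz : ‖z + 1‖ ≤ 1) (hl : 0 ≤ l.re) (hl₀ : l ≠ 0) :
    l - z ≠ 0 := by
  intro h
  obtain rfl := sub_eq_zero.mp h
  have := norm_sq_le_neg_two_mul_re hz
  exact hl₀ (norm_eq_zero.mp (pow_eq_zero_iff two_ne_zero |>.mp (by linarith [sq_nonneg ‖l‖])))

theorem one_lt_norm_add_one (hl : 0 ≤ l.re) (hl₀ : l ≠ 0) : 1 < ‖l + 1‖ := by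
  nlinarith [norm_add_one_sq l, norm_pos_iff.mpr hl₀, norm_nonneg (l + 1)]

theorem norm_inv_sub_le (hz : ‖z + 1‖ ≤ 1) (hl : 0 ≤ l.re) (hl₀ : l ≠ 0) :
    ‖(l - z)⁻¹‖ ≤ (‖l + 1‖ - 1)⁻¹ := by
  rw [norm_inv]
  refine inv_anti₀ (sub_pos.mpr (one_lt_norm_add_one hl hl₀)) ?_
  calc ‖l + 1‖ - 1 ≤ ‖l + 1‖ - ‖z + 1‖ := by linarith
    _ ≤ ‖(l + 1) - (z + 1)‖ := norm_sub_norm_le _ _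
    _ = ‖l - z‖ := by rw [add_sub_add_right_eq_sub]

theorem norm_mul_self_mul_inv_sub_le_two (hz : ‖z + 1‖ ≤ 1) (hl : 0 ≤ l.re) (hl₀ : l ≠ 0) :
    ‖z * z * (l - z)⁻¹‖ ≤ 2 := by
  have hpos := norm_pos_iff.mpr (sub_ne_zero_of_norm_add_one_le hz hl hl₀)
  rw [norm_mul, norm_mul, norm_inv, ← sq, ← div_eq_mul_inv, div_le_iff₀ hpos]
  exact norm_sq_le_two_mul_norm_sub hz hl

end UnitDiskAtMinusOne

/-- For the multiplication operator `(Af)(μ) = μ f(μ)` on `L²(Ω)` with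
`Ω` the closed unit disk centered at `-1`, one has `‖A² R(λ,A)‖ ≤ 8` for all `λ ≠ 0` in the
closed right half-plane. -/
theorem stmt17
    (Ω : Set ℂ) (hΩ : Ω = {z : ℂ | ‖z + 1‖ ≤ 1})
    (ν : Measure ℂ) (hν : ν = volume.restrict Ω)
    (A : Lp ℂ 2 ν →L[ℂ] Lp ℂ 2 ν)
    (hA : ∀ f : Lp ℂ 2 ν, A f =ᵐ[ν] fun z => z * f z) :
    ∀ l : ℂ, 0 ≤ l.re → l ≠ 0 → ‖(A ^ 2) * resolvent A l‖ ≤ 8 := by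
  intro l hl hl₀
  have hΩ_ae : ∀ᵐ z ∂ν, ‖z + 1‖ ≤ 1 := by
    subst hΩ hν
    exact ae_restrict_mem (isClosed_le (continuous_add_const 1).norm continuous_const).measurableSet
  have hA' : IsMultiplicationOperator A fun z => z := hA
  have hR := hA'.resolvent (hΩ_ae.mono fun z hz => sub_ne_zero_of_norm_add_one_le hz hl hl₀)
    (measurable_const.sub measurable_id).inv.aestronglyMeasurable
    (hΩ_ae.mono fun z hz => norm_inv_sub_le hz hl hl₀)
  refine le_trans ?_ (by norm_num : (2 : ℝ) ≤ 8)
  rw [sq]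
  refine ((hA'.mul hA').mul hR).norm_le zero_le_two ?_
  filter_upwards [hΩ_ae] with z hz using norm_mul_self_mul_inv_sub_le_two hz hl hl₀
end
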